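/- Let B be an invertible g-symmetric Codazzi tensor field on a Riemannian manifold (M,g) (i.e., (∇^g_X B)(Y) = (∇^g_Y B)(X)). Then the Levi-Civita connection ∇̃ of the metric g̃ := g(B·, B·) is given by ∇̃_X Y = B^{-1}(∇^g_X (B Y)). -/
import Mathlib

/-- Let `B` be an invertible `g`-symmetric Codazzi tensor field on a
Riemannian manifold `(M,g)` with Levi-Civita connection `∇^g` (torsion-free and metric).
Then `∇̃_X Y := B⁻¹(∇^g_X (BY))` is the Levi-Civita connection of `g̃ := g(B·,B·)`, i.e.
it is torsion-free and metric for `g̃`. -/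
theorem levi_civita_of_pullback {R : Type*} [CommRing R] {V : Type*} [AddCommGroup V]
    [Module R V]
    (g : V → V → R) (gsymm : ∀ X Y, g X Y = g Y X)
    (D : V → R → R) (nabla : V → V → V) (bracket : V → V → V)
    (compat : ∀ X Y Z, D X (g Y Z) = g (nabla X Y) Z + g Y (nabla X Z))
    (torsionfree : ∀ X Y, nabla X Y - nabla Y X = bracket X Y)
    (B Binv : V →ₗ[R] V)
    (hBinv1 : ∀ v, Binv (B v) = v) (hBinv2 : ∀ v, B (Binv v) = v)
    (hBsym : ∀ X Y, g (B X) Y = g X (B Y))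
    (hcodazzi : ∀ X Y, nabla X (B Y) - B (nabla X Y) = nabla Y (B X) - B (nabla Y X))
    (gtil : V → V → R) (hgtil : ∀ X Y, gtil X Y = g (B X) (B Y))
    (nablat : V → V → V) (hnablat : ∀ X Y, nablat X Y = Binv (nabla X (B Y))) :
    (∀ X Y, nablat X Y - nablat Y X = bracket X Y) ∧
    (∀ X Y Z, D X (gtil Y Z) = gtil (nablat X Y) Z + gtil Y (nablat X Z)) := by
  constructor
  · intro X Y
    have h : nabla X (B Y) - nabla Y (B X) = B (bracket X Y) := by
      have := hcodazzi X Y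
      rw [sub_eq_sub_iff_sub_eq_sub] at this
      have h2 := this
      rw [h2, ← map_sub, torsionfree]
    rw [hnablat, hnablat, ← map_sub, h, hBinv1]
  · intro X Y Z
    rw [hgtil, compat, hgtil, hgtil, hnablat, hnablat, hBinv2, hBinv2]
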